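/- Under the scalar framework, suppose φ is strictly decreasing on (sup supp(𝒯(Ȳ)), ∞) and the technical assumptions (A6) and (A7) hold. Then the equation φ(a) = ζ(a) has exactly one solution in (sup supp(𝒯(Ȳ)), ∞); in particular a* is unique. -/

import Mathlib

open MeasureTheory ProbabilityTheory Filter Topology
open scoped ENNReal NNReal

noncomputable section

namespace SpecGLM

/-- The (topological) support of a measure on `ℝ`. -/
def msupport (μ : Measure ℝ) : Set ℝ := {x | ∀ U ∈ nhds x, μ U ≠ 0}

/-- `k`-th largest eigenvalue (1-indexed) of a real symmetric matrix; junk value `0`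
if the matrix is not symmetric. -/
def lambdaK {d : ℕ} (A : Matrix (Fin d) (Fin d) ℝ) (k : ℕ) : ℝ := by
  classical
  exact if hA : A.IsHermitian then
    (((List.ofFn hA.eigenvalues).insertionSort (· ≥ ·)).getD (k - 1) 0)
  else 0

/-- Empirical distribution of a finite family of real numbers. -/
def esdVec {n : ℕ} (v : Fin n → ℝ) : Measure ℝ :=
  (n : ℝ≥0∞)⁻¹ • ∑ i, Measure.dirac (v i)

/-- Empirical spectral distribution of a real symmetric matrix. -/
def esd {d : ℕ} (A : Matrix (Fin d) (Fin d) ℝ) : Measure ℝ := by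
  classical
  exact if hA : A.IsHermitian then esdVec hA.eigenvalues else 0

/-- Weak convergence of a sequence of measures on `ℝ`. -/
def WeakTendsto (ν : ℕ → Measure ℝ) (ν' : Measure ℝ) : Prop :=
  ∀ f : BoundedContinuousFunction ℝ ℝ,
    Tendsto (fun k => ∫ x, f x ∂(ν k)) atTop (𝓝 (∫ x, f x ∂ν'))

/-- Convergence in probability of a sequence of real random variables to a constant. -/
def TendstoInProbability {Ω : Type*} [MeasurableSpace Ω] (μ : Measure Ω)
    (X : ℕ → Ω → ℝ) (c : ℝ) : Prop :=
  ∀ ε : ℝ, 0 < ε → Tendsto (fun k => μ {ω | ε ≤ |X k ω - c|}) atTop (𝓝 0)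

/-- Almost sure convergence of a sequence of real random variables to a constant. -/
def TendstoAlmostSurely {Ω : Type*} [MeasurableSpace Ω] (μ : Measure Ω)
    (X : ℕ → Ω → ℝ) (c : ℝ) : Prop :=
  ∀ᵐ ω ∂μ, Tendsto (fun k => X k ω) atTop (𝓝 c)

/-- Pseudo-Lipschitz functions of finite order. -/
def PseudoLipschitz (f : ℝ → ℝ) : Prop :=
  ∃ (j : ℕ) (L : ℝ), ∀ x y : ℝ,
    |f x - f y| ≤ L * |x - y| * (1 + |x| ^ (j - 1) + |y| ^ (j - 1))

/-- A finite family of real random variables is i.i.d. with common law `ν`. -/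
def IIDLaw {Ω : Type*} [MeasurableSpace Ω] (μ : Measure Ω) {ι : Type*} [Fintype ι]
    (f : ι → Ω → ℝ) (ν : Measure ℝ) : Prop :=
  (∀ i, Measurable (f i)) ∧ (∀ i, Measure.map (f i) μ = ν) ∧
    iIndepFun f μ

/-- The positive semidefinite square root of a matrix (junk value `0` if not psd). -/
def sqrtMat {d : ℕ} (A : Matrix (Fin d) (Fin d) ℝ) : Matrix (Fin d) (Fin d) ℝ := by
  classical
  exact if hA : A.PosSemidef then
    (hA.1.eigenvectorUnitary : Matrix (Fin d) (Fin d) ℝ) *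
      Matrix.diagonal (Real.sqrt ∘ hA.1.eigenvalues) *
      (star hA.1.eigenvectorUnitary : Matrix (Fin d) (Fin d) ℝ)
  else 0

/-- Euclidean norm of a vector. -/
def vnorm {d : ℕ} (v : Fin d → ℝ) : ℝ := Real.sqrt (∑ i, v i ^ 2)

/-- Euclidean inner product. -/
def dot {d : ℕ} (u v : Fin d → ℝ) : ℝ := ∑ i, u i * v i

/-- A probability space bundled as a structure. -/
structure ProbSpace where
  carrier : Type
  inst : MeasurableSpace carrier
  meas : @Measure carrier inst
  prob : @IsProbabilityMeasure carrier inst meas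

attribute [instance] ProbSpace.inst ProbSpace.prob

end SpecGLM
namespace SpecGLM

/-- Scalar data of the GLM: aspect ratio, law of `Σ̄`, noise law, link, preprocessing. -/
structure SD where
  delta : ℝ
  muS : Measure ℝ
  Pe : Measure ℝ
  q : ℝ → ℝ → ℝ
  T : ℝ → ℝ

namespace SD

variable (S : SD)

/-- `E[Σ̄]`. -/
def meanS : ℝ := ∫ s, s ∂S.muS

/-- `sup supp Σ̄`. -/
def sSig : ℝ := sSup (msupport S.muS)

/-- `inf supp Σ̄`. -/
def iSig : ℝ := sInf (msupport S.muS)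

/-- Law of `Ḡ ~ N(0, E[Σ̄]/δ)`. -/
def muG : Measure ℝ := gaussianReal 0 (Real.toNNReal (S.meanS / S.delta))

/-- Joint law of `(Ḡ, ε̄)`. -/
def muGE : Measure (ℝ × ℝ) := S.muG.prod S.Pe

/-- Law of `Ȳ = q(Ḡ, ε̄)`. -/
def muY : Measure ℝ := Measure.map (fun p : ℝ × ℝ => S.q p.1 p.2) S.muGE

/-- `sup supp (𝒯(Ȳ))`. -/
def tauSup : ℝ := sSup (msupport (Measure.map S.T S.muY))

/-- `ℱ_a(y) = 𝒯(y)/(a - 𝒯(y))`. -/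
def Fa (a y : ℝ) : ℝ := S.T y / (a - S.T y)

/-- `E[ℱ_a(Ȳ)]`. -/
def EF (a : ℝ) : ℝ := ∫ y, S.Fa a y ∂S.muY

/-- `E[Ḡ² ℱ_a(Ȳ)]`. -/
def EG2F (a : ℝ) : ℝ := ∫ p : ℝ × ℝ, p.1 ^ 2 * S.Fa a (S.q p.1 p.2) ∂S.muGE

/-- `E[ℱ_a(Ȳ)²]`. -/
def EFsq (a : ℝ) : ℝ := ∫ y, (S.Fa a y) ^ 2 ∂S.muY

/-- `E[Ḡ² ℱ_a(Ȳ)²]`. -/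
def EG2Fsq (a : ℝ) : ℝ := ∫ p : ℝ × ℝ, p.1 ^ 2 * (S.Fa a (S.q p.1 p.2)) ^ 2 ∂S.muGE

/-- `E[((δ/E[Σ̄])Ḡ² - 1) ℱ_a(Ȳ)]`. -/
def EGm1F (a : ℝ) : ℝ :=
  ∫ p : ℝ × ℝ, ((S.delta / S.meanS) * p.1 ^ 2 - 1) * S.Fa a (S.q p.1 p.2) ∂S.muGE

/-- `E[((δ/E[Σ̄])Ḡ² - 1) ℱ_a(Ȳ)²]`. -/
def EGm1Fsq (a : ℝ) : ℝ :=
  ∫ p : ℝ × ℝ, ((S.delta / S.meanS) * p.1 ^ 2 - 1) * (S.Fa a (S.q p.1 p.2)) ^ 2 ∂S.muGE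

/-- The left end `s(a)` of the admissible interval for `γ(a)`. -/
def sfun (a : ℝ) : ℝ :=
  if 0 < S.EF a then S.sSig * S.EF a else if S.EF a < 0 then S.iSig * S.EF a else 0

/-- `E[Σ̄/(g - cΣ̄)]`. -/
def R1 (c g : ℝ) : ℝ := ∫ s, s / (g - c * s) ∂S.muS

/-- `E[Σ̄²/(g - cΣ̄)]`. -/
def R2 (c g : ℝ) : ℝ := ∫ s, s ^ 2 / (g - c * s) ∂S.muS

/-- `E[Σ̄/(g - cΣ̄)²]`. -/
def R11 (c g : ℝ) : ℝ := ∫ s, s / (g - c * s) ^ 2 ∂S.muS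

/-- `E[Σ̄²/(g - cΣ̄)²]`. -/
def R22 (c g : ℝ) : ℝ := ∫ s, s ^ 2 / (g - c * s) ^ 2 ∂S.muS

/-- `E[Σ̄³/(g - cΣ̄)²]`. -/
def R33 (c g : ℝ) : ℝ := ∫ s, s ^ 3 / (g - c * s) ^ 2 ∂S.muS

/-- `γ : (sup supp 𝒯(Ȳ), ∞) → ℝ` is the function `a ↦ γ(a)`, the unique solution in
`(s(a), ∞)` of `1 = (1/δ) E[Σ̄/(γ(a) - E[ℱ_a(Ȳ)]Σ̄)]`. -/
def IsGammaFun (γ : ℝ → ℝ) : Prop :=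
  ∀ a, S.tauSup < a →
    S.sfun a < γ a ∧ 1 = (1 / S.delta) * S.R1 (S.EF a) (γ a) ∧
      ∀ g, S.sfun a < g → 1 = (1 / S.delta) * S.R1 (S.EF a) g → g = γ a

end SD

/-- `ψ(a) = a γ(a)`. -/
def psifun (γ : ℝ → ℝ) (a : ℝ) : ℝ := a * γ a

/-- `ζ(a) = ψ(max{a, a°})`. -/
def zetafun (γ : ℝ → ℝ) (a0 a : ℝ) : ℝ := psifun γ (max a a0)

namespace SD

variable (S : SD)

/-- `φ(a) = (a/E[Σ̄]) E[Ḡ²ℱ_a(Ȳ)] E[Σ̄²/(γ(a) - E[ℱ_a(Ȳ)]Σ̄)]`. -/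
def phi (γ : ℝ → ℝ) (a : ℝ) : ℝ :=
  (a / S.meanS) * S.EG2F a * S.R2 (S.EF a) (γ a)

/-- `a°` is the largest critical point of `ψ` in `(sup supp 𝒯(Ȳ), ∞)`. -/
def IsACirc (γ : ℝ → ℝ) (a0 : ℝ) : Prop :=
  S.tauSup < a0 ∧ deriv (psifun γ) a0 = 0 ∧
    ∀ a, S.tauSup < a → deriv (psifun γ) a = 0 → a ≤ a0

/-- `a*` is the largest solution of `ζ(a) = φ(a)` in `(sup supp 𝒯(Ȳ), ∞)`. -/
def IsAStar (γ : ℝ → ℝ) (a0 astar : ℝ) : Prop :=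
  S.tauSup < astar ∧ zetafun γ a0 astar = S.phi γ astar ∧
    ∀ a, S.tauSup < a → zetafun γ a0 a = S.phi γ a → a ≤ astar

/-- `w₁`. -/
def w1 (γ : ℝ → ℝ) (astar : ℝ) : ℝ :=
  (1 / (S.delta * S.meanS)) * S.EGm1Fsq astar * (S.R2 (S.EF astar) (γ astar)) ^ 2
    + (1 / S.delta) * S.EFsq astar * S.R33 (S.EF astar) (γ astar)

/-- `w₂`. -/
def w2 (γ : ℝ → ℝ) (astar : ℝ) : ℝ :=
  (1 / S.delta) * S.EFsq astar * S.R22 (S.EF astar) (γ astar)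

/-- The limiting overlap `η`. -/
def eta (γ : ℝ → ℝ) (astar : ℝ) : ℝ :=
  Real.sqrt (((1 - S.w2 γ astar) * (S.R1 (S.EF astar) (γ astar)) ^ 2) /
    ((1 - S.w2 γ astar) * S.R22 (S.EF astar) (γ astar)
      + S.w1 γ astar * S.R11 (S.EF astar) (γ astar)))

/-- Basic scalar assumptions: `δ ∈ (0,∞)`, `Σ̄` a probability law compactly supported in
`(0,∞)`, `P_ε` a probability law with finite second moment, `q` measurable. -/
def Scalar : Prop :=
  0 < S.delta ∧ IsProbabilityMeasure S.muS ∧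
    (∃ l u : ℝ, 0 < l ∧ msupport S.muS ⊆ Set.Icc l u) ∧
    IsProbabilityMeasure S.Pe ∧ Integrable (fun x : ℝ => x ^ 2) S.Pe ∧
    Measurable (fun p : ℝ × ℝ => S.q p.1 p.2)

/-- Assumption (A5) on the preprocessing function. -/
def A5 : Prop :=
  (∃ C : ℝ, ∀ y, |S.T y| ≤ C) ∧ PseudoLipschitz S.T ∧
    0 < sSup (S.T '' msupport S.muY)

/-- Assumption (A6) on `Σ̄`. -/
def A6 : Prop :=
  ∀ x : ℝ, x ≠ 0 →
    Tendsto (fun g => S.R1 x g) (𝓝[>] (if 0 < x then x * S.sSig else x * S.iSig)) atTop ∧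
    Tendsto (fun g => S.R22 x g) (𝓝[>] (if 0 < x then x * S.sSig else x * S.iSig)) atTop ∧
    Tendsto (fun g => S.R33 x g) (𝓝[>] (if 0 < x then x * S.sSig else x * S.iSig)) atTop

/-- Assumption (A7) on the preprocessing function. -/
def A7 : Prop :=
  Tendsto S.EF (𝓝[>] S.tauSup) atTop ∧ Tendsto S.EG2F (𝓝[>] S.tauSup) atTop

/-- Replace the preprocessing function. -/
def withT (𝒯 : ℝ → ℝ) : SD := { S with T := 𝒯 }

end SD

/-- The criticality condition `a* > a°` holds for the scalar data `S`. -/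
def CriticalityHolds (S : SD) : Prop :=
  ∃ (γ : ℝ → ℝ) (a0 astar : ℝ),
    S.IsGammaFun γ ∧ S.IsACirc γ a0 ∧ S.IsAStar γ a0 astar ∧ a0 < astar

/-- Observations `y_i = q(⟨x_i, β*⟩, ε_i)` where `X = X̃ Σ^{1/2}`. -/
def yObs (S : SD) {n d : ℕ} (Sm : Matrix (Fin d) (Fin d) ℝ)
    (X : Fin n → Fin d → ℝ) (β : Fin d → ℝ) (e : Fin n → ℝ) (i : Fin n) : ℝ :=
  S.q (((Matrix.of X * sqrtMat Sm).mulVec β) i) (e i)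

/-- The spectral matrix `D = Σ^{1/2} X̃ᵀ T X̃ Σ^{1/2}`. -/
def Dmat (S : SD) {n d : ℕ} (Sm : Matrix (Fin d) (Fin d) ℝ)
    (X : Fin n → Fin d → ℝ) (β : Fin d → ℝ) (e : Fin n → ℝ) :
    Matrix (Fin d) (Fin d) ℝ :=
  sqrtMat Sm * (Matrix.of X).transpose *
    Matrix.diagonal (fun i => S.T (yObs S Sm X β e i)) * Matrix.of X * sqrtMat Sm

end SpecGLM

/-!
Uniqueness: `ψ` has no critical point beyond `a°`, so by Darboux its derivative has constant
sign there, and since `ψ(a) ≥ a (inf supp Σ̄/δ - |E[ℱ_a(Ȳ)]| sup supp Σ̄) → ∞` the sign is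
positive. Hence `ζ = ψ ∘ max(·, a°)` is non-decreasing, while `φ` strictly decreases, so `φ - ζ`
vanishes at most once.

Existence: `E[Σ̄²/(γ - cΣ̄)] ≥ inf supp Σ̄ · E[Σ̄/(γ - cΣ̄)] = inf supp Σ̄ · δ`, so (A7) forces
`φ → ∞` as `a ↓ sup supp 𝒯(Ȳ)`, where `ζ ≡ ψ(a°)`; at infinity `ζ = ψ → ∞` while `φ`
decreases. The intermediate value theorem applies because `γ` is continuous: the root in `g` of
`E[Σ̄/(g - cΣ̄)] = δ` moves continuously with `c`, the left side being continuous in `(c, g)`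
and strictly decreasing in `g`.
-/

namespace SpecGLM

open Set

section Support

lemma msupport_eq_support (μ : Measure ℝ) : msupport μ = μ.support := by
  ext x
  simp [msupport, Measure.mem_support_iff_forall, pos_iff_ne_zero]

lemma ae_mem_msupport (μ : Measure ℝ) : ∀ᵐ x ∂μ, x ∈ msupport μ := by
  rw [msupport_eq_support]
  exact Measure.support_mem_ae

lemma msupport_nonempty (μ : Measure ℝ) [NeZero μ] : (msupport μ).Nonempty :=
  msupport_eq_support μ ▸ Measure.nonempty_support (NeZero.ne μ)

lemma image_msupport_subset_msupport_map {f : ℝ → ℝ} (hf : Continuous f) (μ : Measure ℝ) :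
    f '' msupport μ ⊆ msupport (μ.map f) := by
  rintro _ ⟨x, hx, rfl⟩ U hU hU0
  refine hx _ (hf.continuousAt.preimage_mem_nhds hU) (le_antisymm ?_ bot_le)
  exact hU0 ▸ Measure.le_map_apply hf.measurable.aemeasurable U

lemma msupport_map_subset_Iic {f : ℝ → ℝ} (hf : Measurable f) {C : ℝ} (hC : ∀ x, f x ≤ C)
    (μ : Measure ℝ) : msupport (μ.map f) ⊆ Iic C := by
  rw [msupport_eq_support]
  exact Measure.support_subset_of_isClosed isClosed_Iic
    ((ae_map_iff hf.aemeasurable measurableSet_Iic).2 (.of_forall hC))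

end Support

lemma PseudoLipschitz.continuous {f : ℝ → ℝ} (hf : PseudoLipschitz f) : Continuous f := by
  obtain ⟨j, L, hf⟩ := hf
  refine continuous_iff_continuousAt.2 fun x => ?_
  have hbound : Tendsto (fun y => L * |y - x| * (1 + |y| ^ (j - 1) + |x| ^ (j - 1))) (𝓝 x)
      (𝓝 0) := by
    have : Continuous fun y => L * |y - x| * (1 + |y| ^ (j - 1) + |x| ^ (j - 1)) := by
      fun_prop
    simpa using this.tendsto x
  rw [ContinuousAt, tendsto_iff_norm_sub_tendsto_zero]
  exact squeeze_zero (fun _ => norm_nonneg _) (fun y => hf y x) hbound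

lemma abs_div_sub_le {t C τ b : ℝ} (hC : |t| ≤ C) (ht : t ≤ τ) (hb : τ < b) :
    |t / (b - t)| ≤ C / (b - τ) := by
  rw [abs_div, abs_of_pos (by linarith : 0 < b - t)]
  exact div_le_div₀ ((abs_nonneg t).trans hC) hC (by linarith) (by linarith)

lemma continuousAt_integral_mul_div_sub {α : Type*} [MeasurableSpace α] {ν : Measure α}
    {w h : α → ℝ} {C τ a : ℝ} (hw : Integrable w ν) (hh : Measurable h)
    (hC : ∀ᵐ x ∂ν, |h x| ≤ C) (hτ : ∀ᵐ x ∂ν, h x ≤ τ) (ha : τ < a) :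
    ContinuousAt (fun b => ∫ x, w x * (h x / (b - h x)) ∂ν) a := by
  apply continuousAt_of_dominated (bound := fun x => ‖w x‖ * (C / ((a - τ) / 2)))
  · exact .of_forall fun b => hw.1.mul (hh.div (measurable_const.sub hh)).aestronglyMeasurable
  · filter_upwards [eventually_gt_nhds (show (a + τ) / 2 < a by linarith)] with b hb
    filter_upwards [hC, hτ] with x hCx hτx
    rw [norm_mul]
    gcongr
    calc ‖h x / (b - h x)‖ ≤ C / (b - τ) := abs_div_sub_le hCx hτx (by linarith)
      _ ≤ C / ((a - τ) / 2) :=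
        div_le_div_of_nonneg_left ((abs_nonneg _).trans hCx) (by linarith) (by linarith)
  · exact hw.norm.mul_const _
  · filter_upwards [hτ] with x hx
    exact continuousAt_const.mul
      (continuousAt_const.div (continuousAt_id.sub continuousAt_const) (by linarith))

lemma integral_lt_integral_of_ae_lt {α : Type*} [MeasurableSpace α] {μ : Measure α} [NeZero μ]
    {f g : α → ℝ} (hf : Integrable f μ) (hg : Integrable g μ) (h : ∀ᵐ x ∂μ, f x < g x) :
    ∫ x, f x ∂μ < ∫ x, g x ∂μ := by
  rw [← sub_pos, ← integral_sub hg hf]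
  refine (integral_pos_iff_support_of_nonneg_ae (h.mono fun x hx => ?_) (hg.sub hf)).2 ?_
  · exact (sub_pos.2 hx).le
  · have hsupp : Function.support (g - f) ∈ ae μ := h.mono fun x hx => (sub_pos.2 hx).ne'
    rw [measure_congr (ae_eq_univ.2 hsupp)]
    exact Measure.measure_univ_pos.2 (NeZero.ne μ)

lemma strictMonoOn_Ici_of_deriv_ne_zero {f : ℝ → ℝ} {a : ℝ} (hc : ContinuousOn f (Ici a))
    (hd : ∀ x, a < x → deriv f x ≠ 0) (htop : Tendsto f atTop atTop) :
    StrictMonoOn f (Ici a) := by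
  have hderiv : ∀ x ∈ Ioi a, HasDerivWithinAt f (deriv f x) (Ioi a) x := fun x hx =>
    (differentiableAt_of_deriv_ne_zero (hd x hx)).hasDerivAt.hasDerivWithinAt
  -- Darboux: the derivative has constant sign, and a negative sign contradicts `f → ∞`.
  rcases hasDerivWithinAt_forall_lt_or_forall_gt_of_forall_ne (convex_Ioi a) hderiv hd with
    hneg | hpos
  · have hanti : StrictAntiOn f (Ici a) :=
      strictAntiOn_of_deriv_neg (convex_Ici a) hc (by simpa only [interior_Ici] using hneg)
    obtain ⟨b, hfb, hab⟩ := ((htop.eventually_gt_atTop (f a)).and (eventually_gt_atTop a)).exists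
    exact absurd (hanti self_mem_Ici hab.le hab) hfb.not_gt
  · exact strictMonoOn_of_deriv_pos (convex_Ici a) hc (by simpa only [interior_Ici] using hpos)

lemma existsUnique_eq_of_monotoneOn_of_strictAntiOn {s : Set ℝ} (hs : s.OrdConnected)
    {f g : ℝ → ℝ} (hfc : ContinuousOn f s) (hgc : ContinuousOn g s) (hf : MonotoneOn f s)
    (hg : StrictAntiOn g s) {a b : ℝ} (ha : a ∈ s) (hb : b ∈ s) (hfa : f a < g a)
    (hfb : g b < f b) : ∃! x, x ∈ s ∧ f x = g x := by
  have hsub : StrictMonoOn (fun x => f x - g x) s := fun x hx y hy hxy => by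
    linarith [hf hx hy hxy.le, hg hx hy hxy]
  have hab : a < b := (hsub.lt_iff_lt ha hb).1 (by linarith)
  obtain ⟨x, hx, hfgx⟩ := intermediate_value_Icc hab.le ((hfc.sub hgc).mono (hs.out ha hb))
    (show (0 : ℝ) ∈ Icc (f a - g a) (f b - g b) from ⟨by linarith, by linarith⟩)
  have hxs := hs.out ha hb hx
  refine ⟨x, ⟨hxs, sub_eq_zero.1 hfgx⟩, fun y ⟨hy, hfgy⟩ => hsub.injOn hy hxs ?_⟩
  simpa [hfgy] using hfgx.symm

section Resolvent

variable {μ : Measure ℝ} {l u : ℝ}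

lemma mul_le_max_mul_of_mem_Icc {c s : ℝ} (hs : s ∈ Icc l u) :
    c * s ≤ max (c * l) (c * u) := by
  rcases le_total 0 c with hc | hc
  · exact (mul_le_mul_of_nonneg_left hs.2 hc).trans (le_max_right _ _)
  · exact (mul_le_mul_of_nonpos_left hs.1 hc).trans (le_max_left _ _)

lemma abs_le_of_mem_Icc (hl : 0 < l) {s : ℝ} (hs : s ∈ Icc l u) : |s| ≤ u := by
  rw [abs_of_pos (hl.trans_le hs.1)]
  exact hs.2

lemma abs_sq_le_of_mem_Icc (hl : 0 < l) {s : ℝ} (hs : s ∈ Icc l u) : |s ^ 2| ≤ u ^ 2 := by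
  rw [abs_pow]
  exact pow_le_pow_left₀ (abs_nonneg s) (abs_le_of_mem_Icc hl hs) 2

lemma norm_div_sub_mul_le {f : ℝ → ℝ} {B c g s η : ℝ} (hs : s ∈ Icc l u)
    (hB : ∀ s ∈ Icc l u, |f s| ≤ B) (hη : 0 < η) (hg : η ≤ g - max (c * l) (c * u)) :
    ‖f s / (g - c * s)‖ ≤ B / η := by
  have hden : η ≤ g - c * s := hg.trans (by linarith [mul_le_max_mul_of_mem_Icc (c := c) hs])
  rw [Real.norm_eq_abs, abs_div, abs_of_pos (hη.trans_le hden)]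
  exact div_le_div₀ ((abs_nonneg _).trans (hB s hs)) (hB s hs) hη hden

lemma integrable_div_sub_mul [IsFiniteMeasure μ] (hμ : ∀ᵐ s ∂μ, s ∈ Icc l u) {f : ℝ → ℝ}
    {B c g : ℝ} (hf : Measurable f) (hB : ∀ s ∈ Icc l u, |f s| ≤ B)
    (hg : max (c * l) (c * u) < g) : Integrable (fun s => f s / (g - c * s)) μ :=
  Integrable.mono' (integrable_const _)
    (hf.div (measurable_const.sub (measurable_const.mul measurable_id))).aestronglyMeasurable
    (hμ.mono fun _ hs => norm_div_sub_mul_le hs hB (sub_pos.2 hg) le_rfl)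

lemma continuousAt_integral_div_sub_mul [IsFiniteMeasure μ] (hμ : ∀ᵐ s ∂μ, s ∈ Icc l u)
    {f : ℝ → ℝ} {B : ℝ} (hf : Measurable f) (hB : ∀ s ∈ Icc l u, |f s| ≤ B)
    {X : Type*} [TopologicalSpace X] [FirstCountableTopology X] {c g : X → ℝ} {x : X}
    (hc : ContinuousAt c x) (hg : ContinuousAt g x) (hx : max (c x * l) (c x * u) < g x) :
    ContinuousAt (fun y => ∫ s, f s / (g y - c y * s) ∂μ) x := by
  set η := g x - max (c x * l) (c x * u)
  have hη : 0 < η := sub_pos.2 hx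
  have hgap : ∀ᶠ y in 𝓝 x, η / 2 ≤ g y - max (c y * l) (c y * u) :=
    ((hg.sub ((hc.mul_const l).max (hc.mul_const u))).eventually_const_lt
      (half_lt_self hη)).mono fun _ hy => hy.le
  apply continuousAt_of_dominated (bound := fun _ => B / (η / 2))
  · exact .of_forall fun y =>
      (hf.div (measurable_const.sub (measurable_const.mul measurable_id))).aestronglyMeasurable
  · filter_upwards [hgap] with y hy
    exact hμ.mono fun s hs => norm_div_sub_mul_le hs hB (half_pos hη) hy
  · exact integrable_const _
  · filter_upwards [hμ] with s hs
    refine continuousAt_const.div (hg.sub (hc.mul continuousAt_const)) ?_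
    linarith [mul_le_max_mul_of_mem_Icc (c := c x) hs]

variable [IsProbabilityMeasure μ]

lemma strictAntiOn_integral_div_sub_mul (hμ : ∀ᵐ s ∂μ, s ∈ Icc l u) (hl : 0 < l) (c : ℝ) :
    StrictAntiOn (fun g => ∫ s, s / (g - c * s) ∂μ) (Ioi (max (c * l) (c * u))) := by
  intro g hg g' hg' hgg'
  refine integral_lt_integral_of_ae_lt
    (integrable_div_sub_mul hμ measurable_id (fun _ => abs_le_of_mem_Icc hl) hg')
    (integrable_div_sub_mul hμ measurable_id (fun _ => abs_le_of_mem_Icc hl) hg)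
    (hμ.mono fun s hs => ?_)
  have hden : 0 < g - c * s := by
    linarith [mul_le_max_mul_of_mem_Icc (c := c) hs, mem_Ioi.1 hg]
  exact div_lt_div_of_pos_left (hl.trans_le hs.1) hden (by linarith)

lemma div_add_abs_mul_le_integral (hμ : ∀ᵐ s ∂μ, s ∈ Icc l u) (hl : 0 < l) {c g : ℝ}
    (hg : max (c * l) (c * u) < g) : l / (g + |c| * u) ≤ ∫ s, s / (g - c * s) ∂μ := by
  have hbound : ∀ᵐ s ∂μ, l / (g + |c| * u) ≤ s / (g - c * s) := hμ.mono fun s hs => by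
    have hden : 0 < g - c * s := by linarith [mul_le_max_mul_of_mem_Icc (c := c) hs]
    have hcs : -(c * s) ≤ |c| * u := by
      calc -(c * s) ≤ |c| * |s| := by rw [← abs_mul]; exact neg_le_abs _
        _ ≤ |c| * u := by gcongr; exact abs_le_of_mem_Icc hl hs
    exact div_le_div₀ (hl.trans_le hs.1).le hs.1 hden (by linarith)
  simpa using integral_mono_ae (integrable_const _)
    (integrable_div_sub_mul hμ measurable_id (fun _ => abs_le_of_mem_Icc hl) hg) hbound

lemma mul_integral_le_integral_sq_div (hμ : ∀ᵐ s ∂μ, s ∈ Icc l u) (hl : 0 < l) {c g : ℝ}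
    (hg : max (c * l) (c * u) < g) :
    l * ∫ s, s / (g - c * s) ∂μ ≤ ∫ s, s ^ 2 / (g - c * s) ∂μ := by
  rw [← integral_const_mul]
  refine integral_mono_ae
    ((integrable_div_sub_mul hμ measurable_id (fun _ => abs_le_of_mem_Icc hl) hg).const_mul l)
    (integrable_div_sub_mul hμ (measurable_id.pow_const 2) (fun _ => abs_sq_le_of_mem_Icc hl) hg)
    (hμ.mono fun s hs => ?_)
  have hden : 0 < g - c * s := by linarith [mul_le_max_mul_of_mem_Icc (c := c) hs]
  simp only
  rw [← mul_div_assoc, sq]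
  exact div_le_div_of_nonneg_right (mul_le_mul_of_nonneg_right hs.1 (hl.trans_le hs.1).le) hden.le

lemma continuousAt_of_integral_div_sub_mul_eq (hμ : ∀ᵐ s ∂μ, s ∈ Icc l u) (hl : 0 < l)
    {X : Type*} [TopologicalSpace X] [FirstCountableTopology X] {c γ : X → ℝ} {x : X} {δ : ℝ}
    (hc : ContinuousAt c x)
    (hγ : ∀ᶠ y in 𝓝 x, max (c y * l) (c y * u) < γ y ∧ ∫ s, s / (γ y - c y * s) ∂μ = δ) :
    ContinuousAt γ x := by
  obtain ⟨hγx, hδ⟩ := hγ.self_of_nhds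
  have hM : ContinuousAt (fun y => max (c y * l) (c y * u)) x :=
    (hc.mul_const l).max (hc.mul_const u)
  have hR : ∀ g, max (c x * l) (c x * u) < g →
      ContinuousAt (fun y => ∫ s, s / (g - c y * s) ∂μ) x := fun g hg =>
    continuousAt_integral_div_sub_mul hμ measurable_id (fun _ => abs_le_of_mem_Icc hl) hc
      continuousAt_const hg
  have hanti := fun y => strictAntiOn_integral_div_sub_mul hμ hl (c y)
  refine tendsto_order.2 ⟨fun a ha => ?_, fun b hb => ?_⟩
  · set a' := max a ((max (c x * l) (c x * u) + γ x) / 2)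
    have ha'M : max (c x * l) (c x * u) < a' := lt_max_of_lt_right (by linarith)
    have ha'γ : a' < γ x := max_lt ha (by linarith)
    have hδa' : δ < ∫ s, s / (a' - c x * s) ∂μ := hδ ▸ hanti x ha'M hγx ha'γ
    filter_upwards [hγ, hM.eventually_lt_const ha'M, (hR a' ha'M).eventually_const_lt hδa']
      with y ⟨hγy, hδy⟩ hMy hδy'
    by_contra! hle
    linarith [(hanti y).antitoneOn hγy hMy (hle.trans (le_max_left _ _))]
  · have hδb : ∫ s, s / (b - c x * s) ∂μ < δ := hδ ▸ hanti x hγx (hγx.trans hb) hb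
    filter_upwards [hγ, hM.eventually_lt_const (hγx.trans hb),
      (hR b (hγx.trans hb)).eventually_lt_const hδb] with y ⟨hγy, hδy⟩ hMy hδy'
    by_contra! hle
    linarith [(hanti y).antitoneOn hMy hγy hle]

end Resolvent

namespace SD

variable {S : SD}

lemma Scalar.ae_mem_Icc (hS : S.Scalar) : ∀ᵐ s ∂S.muS, s ∈ Icc S.iSig S.sSig := by
  obtain ⟨-, -, ⟨l, u, -, hsupp⟩, -⟩ := hS
  filter_upwards [ae_mem_msupport S.muS] with s hs
  exact ⟨csInf_le (bddBelow_Icc.mono hsupp) hs, le_csSup (bddAbove_Icc.mono hsupp) hs⟩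

lemma Scalar.iSig_pos (hS : S.Scalar) : 0 < S.iSig := by
  have := hS.2.1
  obtain ⟨-, -, ⟨l, u, hl, hsupp⟩, -⟩ := hS
  exact hl.trans_le (le_csInf (msupport_nonempty S.muS) fun s hs => (hsupp hs).1)

lemma Scalar.iSig_le_sSig (hS : S.Scalar) : S.iSig ≤ S.sSig := by
  have := hS.2.1
  obtain ⟨s, hs⟩ := hS.ae_mem_Icc.exists
  exact hs.1.trans hs.2

lemma Scalar.meanS_pos (hS : S.Scalar) : 0 < S.meanS := by
  have := hS.2.1
  have hint : Integrable (fun s : ℝ => s) S.muS :=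
    Integrable.mono' (integrable_const S.sSig) measurable_id.aestronglyMeasurable
      (hS.ae_mem_Icc.mono fun _ => abs_le_of_mem_Icc hS.iSig_pos)
  have hle : S.iSig ≤ S.meanS := by
    simpa [meanS] using integral_mono_ae (integrable_const S.iSig) hint
      (hS.ae_mem_Icc.mono fun _ hs => hs.1)
  exact hS.iSig_pos.trans_le hle

lemma sfun_eq_max (h : S.iSig ≤ S.sSig) (a : ℝ) :
    S.sfun a = max (S.EF a * S.iSig) (S.EF a * S.sSig) := by
  rw [sfun]
  rcases lt_trichotomy (S.EF a) 0 with hneg | hzero | hpos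
  · rw [if_neg hneg.not_gt, if_pos hneg, max_eq_left (mul_le_mul_of_nonpos_left h hneg.le),
      mul_comm]
  · simp [hzero]
  · rw [if_pos hpos, max_eq_right (mul_le_mul_of_nonneg_left h hpos.le), mul_comm]

lemma Scalar.isProbabilityMeasure_muGE (hS : S.Scalar) : IsProbabilityMeasure S.muGE := by
  obtain ⟨-, -, -, hPe, -⟩ := hS
  rw [muGE, muG]
  infer_instance

lemma Scalar.isProbabilityMeasure_muY (hS : S.Scalar) : IsProbabilityMeasure S.muY := by
  have := hS.isProbabilityMeasure_muGE
  obtain ⟨-, -, -, -, -, hq⟩ := hS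
  exact Measure.isProbabilityMeasure_map hq.aemeasurable

lemma Scalar.integrable_sq_muGE (hS : S.Scalar) :
    Integrable (fun p : ℝ × ℝ => p.1 ^ 2) S.muGE := by
  obtain ⟨-, -, -, hPe, -⟩ := hS
  exact (memLp_id_gaussianReal 2).integrable_sq.comp_fst S.Pe

lemma A5.continuous_T (h : S.A5) : Continuous S.T :=
  h.2.1.continuous

lemma A5.bddAbove_msupport (h : S.A5) : BddAbove (msupport (S.muY.map S.T)) := by
  obtain ⟨C, hC⟩ := h.1
  exact ⟨C, msupport_map_subset_Iic h.continuous_T.measurable (fun y => (abs_le.1 (hC y)).2) _⟩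

lemma A5.tauSup_pos (h : S.A5) : 0 < S.tauSup := by
  obtain ⟨-, -, hpos⟩ := id h
  have hne : (S.T '' msupport S.muY).Nonempty := by
    by_contra hemp
    rw [not_nonempty_iff_eq_empty.1 hemp, Real.sSup_empty] at hpos
    exact lt_irrefl 0 hpos
  exact hpos.trans_le (csSup_le_csSup h.bddAbove_msupport hne
    (image_msupport_subset_msupport_map h.continuous_T S.muY))

lemma A5.ae_T_le_tauSup (h : S.A5) : ∀ᵐ y ∂S.muY, S.T y ≤ S.tauSup := by
  refine (ae_map_iff h.continuous_T.aemeasurable measurableSet_Iic).1 ?_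
  exact (ae_mem_msupport _).mono fun z hz => le_csSup h.bddAbove_msupport hz

lemma Scalar.ae_T_q_le_tauSup (hS : S.Scalar) (h : S.A5) :
    ∀ᵐ p ∂S.muGE, S.T (S.q p.1 p.2) ≤ S.tauSup := by
  obtain ⟨-, -, -, -, -, hq⟩ := hS
  exact (ae_map_iff hq.aemeasurable (h.continuous_T.measurable measurableSet_Iic)).1
    h.ae_T_le_tauSup

lemma Scalar.continuousAt_EF (hS : S.Scalar) (h : S.A5) {a : ℝ} (ha : S.tauSup < a) :
    ContinuousAt S.EF a := by
  have := hS.isProbabilityMeasure_muY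
  obtain ⟨C, hC⟩ := h.1
  show ContinuousAt (fun b => ∫ y, S.T y / (b - S.T y) ∂S.muY) a
  simpa only [one_mul] using continuousAt_integral_mul_div_sub (w := fun _ => 1) (C := C)
    (integrable_const _) h.continuous_T.measurable (.of_forall hC) h.ae_T_le_tauSup ha

lemma Scalar.continuousAt_EG2F (hS : S.Scalar) (h : S.A5) {a : ℝ} (ha : S.tauSup < a) :
    ContinuousAt S.EG2F a := by
  obtain ⟨C, hC⟩ := h.1
  obtain ⟨-, -, -, -, -, hq⟩ := id hS
  exact continuousAt_integral_mul_div_sub (C := C) hS.integrable_sq_muGE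
    (h.continuous_T.measurable.comp hq) (.of_forall fun p => hC _) (hS.ae_T_q_le_tauSup h) ha

lemma Scalar.tendsto_EF_atTop (hS : S.Scalar) (h : S.A5) : Tendsto S.EF atTop (𝓝 0) := by
  have := hS.isProbabilityMeasure_muY
  obtain ⟨C, hC⟩ := h.1
  have hbound : ∀ᶠ a in atTop, ‖S.EF a‖ ≤ C / (a - S.tauSup) := by
    filter_upwards [eventually_gt_atTop S.tauSup] with a ha
    simpa [EF] using norm_integral_le_of_norm_le_const (f := S.Fa a)
      (h.ae_T_le_tauSup.mono fun y hy => abs_div_sub_le (hC y) hy ha)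
  refine squeeze_zero_norm' hbound (tendsto_const_nhds.div_atTop ?_)
  exact tendsto_atTop_add_const_right _ _ tendsto_id

variable {γ : ℝ → ℝ}

lemma IsGammaFun.max_lt_and_R1_eq (hS : S.Scalar) (hγ : S.IsGammaFun γ) {a : ℝ}
    (ha : S.tauSup < a) :
    max (S.EF a * S.iSig) (S.EF a * S.sSig) < γ a ∧ S.R1 (S.EF a) (γ a) = S.delta := by
  obtain ⟨hlt, heq, -⟩ := hγ a ha
  refine ⟨sfun_eq_max hS.iSig_le_sSig a ▸ hlt, ?_⟩
  field_simp [hS.1.ne'] at heq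
  linarith

lemma IsGammaFun.continuousAt (hS : S.Scalar) (h5 : S.A5) (hγ : S.IsGammaFun γ) {a : ℝ}
    (ha : S.tauSup < a) : ContinuousAt γ a := by
  have := hS.2.1
  exact continuousAt_of_integral_div_sub_mul_eq hS.ae_mem_Icc hS.iSig_pos
    (hS.continuousAt_EF h5 ha) ((eventually_gt_nhds ha).mono fun b hb => hγ.max_lt_and_R1_eq hS hb)

lemma IsGammaFun.div_sub_abs_mul_le_apply (hS : S.Scalar) (hγ : S.IsGammaFun γ) {a : ℝ} (ha : S.tauSup < a) :
    S.iSig / S.delta - |S.EF a| * S.sSig ≤ γ a := by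
  have := hS.2.1
  obtain ⟨hlt, hR1⟩ := hγ.max_lt_and_R1_eq hS ha
  have hsSig : 0 < S.sSig := hS.iSig_pos.trans_le hS.iSig_le_sSig
  have hden : 0 < γ a + |S.EF a| * S.sSig := by
    have : -|S.EF a| * S.sSig ≤ S.EF a * S.sSig :=
      mul_le_mul_of_nonneg_right (neg_abs_le _) hsSig.le
    linarith [le_max_right (S.EF a * S.iSig) (S.EF a * S.sSig)]
  have hle : S.iSig ≤ S.R1 (S.EF a) (γ a) * (γ a + |S.EF a| * S.sSig) :=
    (div_le_iff₀ hden).1 (div_add_abs_mul_le_integral hS.ae_mem_Icc hS.iSig_pos hlt)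
  rw [hR1] at hle
  linarith [(div_le_iff₀' hS.1).2 hle]

lemma IsGammaFun.continuousAt_psifun (hS : S.Scalar) (h5 : S.A5) (hγ : S.IsGammaFun γ)
    {a : ℝ} (ha : S.tauSup < a) : ContinuousAt (psifun γ) a :=
  continuousAt_id.mul (hγ.continuousAt hS h5 ha)

lemma IsGammaFun.tendsto_psifun_atTop (hS : S.Scalar) (h5 : S.A5) (hγ : S.IsGammaFun γ) :
    Tendsto (psifun γ) atTop atTop := by
  have hlower : Tendsto (fun a => S.iSig / S.delta - |S.EF a| * S.sSig) atTop
      (𝓝 (S.iSig / S.delta)) := by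
    simpa using tendsto_const_nhds.sub ((hS.tendsto_EF_atTop h5).abs.mul_const S.sSig)
  refine tendsto_atTop_mono' _ ?_
    (tendsto_id.atTop_mul_pos (div_pos hS.iSig_pos hS.1) hlower)
  filter_upwards [eventually_gt_atTop S.tauSup, eventually_ge_atTop 0] with a ha ha0
  exact mul_le_mul_of_nonneg_left (hγ.div_sub_abs_mul_le_apply hS ha) ha0

lemma IsACirc.strictMonoOn_psifun (hS : S.Scalar) (h5 : S.A5) (hγ : S.IsGammaFun γ) {a0 : ℝ}
    (ha0 : S.IsACirc γ a0) : StrictMonoOn (psifun γ) (Ici a0) :=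
  strictMonoOn_Ici_of_deriv_ne_zero
    (fun _ hx => (hγ.continuousAt_psifun hS h5 (ha0.1.trans_le hx)).continuousWithinAt)
    (fun x hx h0 => (ha0.2.2 x (ha0.1.trans hx) h0).not_gt hx)
    (hγ.tendsto_psifun_atTop hS h5)

lemma IsGammaFun.continuousAt_phi (hS : S.Scalar) (h5 : S.A5) (hγ : S.IsGammaFun γ) {a : ℝ}
    (ha : S.tauSup < a) : ContinuousAt (S.phi γ) a := by
  have := hS.2.1
  have hR2 : ContinuousAt (fun b => S.R2 (S.EF b) (γ b)) a :=
    continuousAt_integral_div_sub_mul hS.ae_mem_Icc (measurable_id.pow_const 2)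
      (fun _ => abs_sq_le_of_mem_Icc hS.iSig_pos) (hS.continuousAt_EF h5 ha)
      (hγ.continuousAt hS h5 ha) (hγ.max_lt_and_R1_eq hS ha).1
  exact ((continuousAt_id.div_const _).mul (hS.continuousAt_EG2F h5 ha)).mul hR2

lemma IsGammaFun.tendsto_phi_nhdsGT (hS : S.Scalar) (h5 : S.A5) (h7 : S.A7)
    (hγ : S.IsGammaFun γ) : Tendsto (S.phi γ) (𝓝[>] S.tauSup) atTop := by
  have := hS.2.1
  have hK : 0 < S.tauSup / S.meanS * (S.iSig * S.delta) :=
    mul_pos (div_pos h5.tauSup_pos hS.meanS_pos) (mul_pos hS.iSig_pos hS.1)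
  refine tendsto_atTop_mono' _ ?_ (h7.2.const_mul_atTop hK)
  filter_upwards [self_mem_nhdsWithin, h7.2.eventually_ge_atTop 0] with a ha hE
  obtain ⟨hlt, hR1⟩ := hγ.max_lt_and_R1_eq hS ha
  have hR2 : S.iSig * S.delta ≤ S.R2 (S.EF a) (γ a) :=
    calc S.iSig * S.delta = S.iSig * S.R1 (S.EF a) (γ a) := by rw [hR1]
      _ ≤ S.R2 (S.EF a) (γ a) := mul_integral_le_integral_sq_div hS.ae_mem_Icc hS.iSig_pos hlt
  calc S.tauSup / S.meanS * (S.iSig * S.delta) * S.EG2F a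
      = S.tauSup / S.meanS * S.EG2F a * (S.iSig * S.delta) := by ring
    _ ≤ a / S.meanS * S.EG2F a * S.R2 (S.EF a) (γ a) := by
      have := hS.meanS_pos
      have := h5.tauSup_pos.trans ha
      have := mul_pos hS.iSig_pos hS.1
      gcongr
      exact ha.le

end SD

lemma monotone_zetafun {γ : ℝ → ℝ} {a0 : ℝ} (h : StrictMonoOn (psifun γ) (Ici a0)) :
    Monotone (zetafun γ a0) := fun _ _ hxy =>
  h.monotoneOn (mem_Ici.2 (le_max_right _ _)) (mem_Ici.2 (le_max_right _ _))
    (max_le_max hxy le_rfl)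

lemma continuousAt_zetafun {γ : ℝ → ℝ} {a0 a : ℝ} (h : ContinuousAt (psifun γ) (max a a0)) :
    ContinuousAt (zetafun γ a0) a :=
  h.comp (f := fun x => max x a0) (continuous_id.max continuous_const).continuousAt

theorem unique_aStar_general
    (S : SD) (hScalar : S.Scalar) (hA5 : S.A5) (hA7 : S.A7)
    (γ : ℝ → ℝ) (hγ : S.IsGammaFun γ)
    (a0 : ℝ) (ha0 : S.IsACirc γ a0)
    (hmono : StrictAntiOn (S.phi γ) (Set.Ioi S.tauSup)) :
    ∃! a : ℝ, S.tauSup < a ∧ zetafun γ a0 a = S.phi γ a := by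
  obtain ⟨aL, hζφL, haL⟩ : ∃ a, psifun γ a0 < S.phi γ a ∧ a ∈ Ioo S.tauSup a0 :=
    (((hγ.tendsto_phi_nhdsGT hScalar hA5 hA7).eventually_gt_atTop _).and
      (Ioo_mem_nhdsGT ha0.1)).exists
  obtain ⟨aR, hφζR, haR⟩ :=
    (((hγ.tendsto_psifun_atTop hScalar hA5).eventually_gt_atTop (S.phi γ aL)).and
      (eventually_gt_atTop (max a0 aL))).exists
  have hζL : zetafun γ a0 aL = psifun γ a0 := by rw [zetafun, max_eq_right haL.2.le]
  have hζR : zetafun γ a0 aR = psifun γ aR := by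
    rw [zetafun, max_eq_left (le_max_left a0 aL |>.trans haR.le)]
  have haLR : aL < aR := (le_max_right a0 aL).trans_lt haR
  refine existsUnique_eq_of_monotoneOn_of_strictAntiOn ordConnected_Ioi
    (fun a ha => (continuousAt_zetafun (hγ.continuousAt_psifun hScalar hA5
      (lt_max_of_lt_left ha))).continuousWithinAt)
    (fun a ha => (hγ.continuousAt_phi hScalar hA5 ha).continuousWithinAt)
    ((monotone_zetafun (ha0.strictMonoOn_psifun hScalar hA5 hγ)).monotoneOn _) hmono
    haL.1 (haL.1.trans haLR) (hζL ▸ hζφL) ?_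
  rw [hζR]
  exact (hmono haL.1 (haL.1.trans haLR) haLR).trans hφζR

/-- **Proposition (Uniqueness of `a*`).** If `φ` is strictly decreasing on
`(sup supp 𝒯(Ȳ), ∞)` and (A6), (A7) hold, then the equation `φ(a) = ζ(a)` has
exactly one solution in `(sup supp 𝒯(Ȳ), ∞)`. -/
theorem unique_aStar
    (S : SD) (hScalar : S.Scalar) (hA5 : S.A5) (hA6 : S.A6) (hA7 : S.A7)
    (γ : ℝ → ℝ) (hγ : S.IsGammaFun γ)
    (a0 : ℝ) (ha0 : S.IsACirc γ a0)
    (hmono : StrictAntiOn (S.phi γ) (Set.Ioi S.tauSup)) :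
    ∃! a : ℝ, S.tauSup < a ∧ zetafun γ a0 a = S.phi γ a :=
  unique_aStar_general S hScalar hA5 hA7 γ hγ a0 ha0 hmono

end SpecGLM
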